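/- arXiv:2511.08875 — 2 statements merged into one kernel-verified Lean document; each statement's English description precedes it below -/
import Mathlib

section
/- Let A and E be n×n real symmetric matrices, Ã = A + E, with eigenvalues of A ordered decreasingly λ_1 ≥ … ≥ λ_n. Let Π_p (respectively Π̃_p) be the orthogonal projection onto the span of the eigenvectors of A (respectively Ã) corresponding to the p largest eigenvalues, and set δ_p := λ_p − λ_{p+1} > 0. Then ‖Π̃_p − Π_p‖ ≤ 2‖E‖/δ_p, where ‖·‖ is the spectral norm. -/
/-!
Write `P = Π_p`, `Q = Π̃_p`, `ε = ‖E‖` and `δ = δ_p`. The two terms of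
`Q - P = (1 - P) Q - P (1 - Q)` have orthogonal ranges and act on the orthogonal pieces `Q x` and
`(1 - Q) x`, so `‖Q - P‖ ≤ max ‖(1 - P) Q‖ ‖(1 - Q) P‖`; both norms are at most `1`, which settles
the case `δ ≤ 2 ε`.

Otherwise Weyl's inequality `|λ̃_k - λ_k| ≤ ε`, tested on a nonzero vector orthogonal to
`u_{k+1}, …, u_n` and to `ũ_1, …, ũ_{k-1}` (only `n - 1` constraints), gives
`λ̃_p - λ_{p+1} ≥ δ - ε ≥ δ / 2` and `λ_p - λ̃_{p+1} ≥ δ / 2`. The `sin Θ` bound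
`‖(1 - P) Q‖ ≤ ε / (λ̃_p - λ_{p+1})` comes from the top singular vectors of `T = (1 - P) Q`:
a unit `v ∈ range Q` and `y = T v / ‖T‖ ∈ ker P` with `Tᵀ y = ‖T‖ v`, for which
`‖T‖ (λ̃_p - λ_{p+1}) ≤ ⟪y, Ã v⟫ - ⟪y, A v⟫ ≤ ε`.
-/

open Matrix Finset

/-- Spectral (ℓ²→ℓ²) operator norm of a real square matrix. -/
noncomputable def specNorm {n : ℕ} (M : Matrix (Fin n) (Fin n) ℝ) : ℝ :=
  ‖LinearMap.toContinuousLinearMap (Matrix.toEuclideanLin M)‖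

open RealInnerProductSpace WithLp

namespace ContinuousLinearMap

theorem exists_norm_eq_one_norm_apply_eq_opNorm {E F : Type*} [NormedAddCommGroup E]
    [NormedSpace ℝ E] [FiniteDimensional ℝ E] [Nontrivial E] [SeminormedAddCommGroup F]
    [NormedSpace ℝ F] (T : E →L[ℝ] F) : ∃ v, ‖v‖ = 1 ∧ ‖T v‖ = ‖T‖ := by
  obtain ⟨v, hv, hmax⟩ := (isCompact_sphere (0 : E) 1).exists_isMaxOn
    (NormedSpace.sphere_nonempty.mpr zero_le_one) T.continuous.norm.continuousOn
  rw [mem_sphere_zero_iff_norm] at hv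
  refine ⟨v, hv, le_antisymm (by simpa [hv] using T.le_opNorm v) ?_⟩
  exact opNorm_le_of_unit_norm (norm_nonneg _) fun x hx => hmax (mem_sphere_zero_iff_norm.mpr hx)

theorem exists_norm_eq_one_adjoint_apply_eq {E F : Type*} [NormedAddCommGroup E]
    [InnerProductSpace ℝ E] [FiniteDimensional ℝ E] [Nontrivial E] [NormedAddCommGroup F]
    [InnerProductSpace ℝ F] [CompleteSpace F] (T : E →L[ℝ] F) :
    ∃ v, ‖v‖ = 1 ∧ ‖T v‖ = ‖T‖ ∧ adjoint T (T v) = ‖T‖ ^ 2 • v := by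
  obtain ⟨v, hv, hTv⟩ := T.exists_norm_eq_one_norm_apply_eq_opNorm
  refine ⟨v, hv, hTv, ?_⟩
  set z := adjoint T (T v)
  have hinner : ⟪v, z⟫ = ‖T‖ ^ 2 := by
    rw [adjoint_inner_right, real_inner_self_eq_norm_sq, hTv]
  have hz_le : ‖z‖ ≤ ‖T‖ ^ 2 := by
    calc ‖z‖ ≤ ‖adjoint T‖ * ‖T v‖ := (adjoint T).le_opNorm _
      _ = ‖T‖ ^ 2 := by rw [LinearIsometryEquiv.norm_map, hTv, sq]
  have hz : ‖z‖ = ‖T‖ ^ 2 :=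
    hz_le.antisymm (by simpa [hinner, hv] using real_inner_le_norm v z)
  -- `v` and `z` attain equality in Cauchy–Schwarz
  have := inner_eq_norm_mul_iff_real.mp (by rw [hinner, hv, hz, one_mul] : ⟪v, z⟫ = ‖v‖ * ‖z‖)
  rw [hz, hv, one_smul] at this
  exact this.symm

end ContinuousLinearMap

section Operator

variable {E : Type*} [NormedAddCommGroup E] [InnerProductSpace ℝ E] [CompleteSpace E]

namespace IsStarProjection

variable {P Q : E →L[ℝ] E}

theorem apply_apply (hP : IsStarProjection P) (x : E) : P (P x) = P x := by
  rw [← mul_apply_eq_comp, hP.isIdempotentElem.eq]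

theorem inner_apply_left (hP : IsStarProjection P) (x y : E) : ⟪P x, y⟫ = ⟪x, P y⟫ :=
  hP.isSelfAdjoint.isSymmetric x y

theorem inner_apply_sub_self (hP : IsStarProjection P) (x y : E) : ⟪P x, y - P y⟫ = 0 := by
  rw [hP.inner_apply_left, map_sub, hP.apply_apply, sub_self, inner_zero_right]

theorem norm_apply_sq_add_norm_sq (hP : IsStarProjection P) (x : E) :
    ‖P x‖ ^ 2 + ‖x - P x‖ ^ 2 = ‖x‖ ^ 2 := by
  have := norm_add_sq_eq_norm_sq_add_norm_sq_real (hP.inner_apply_sub_self x x)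
  rw [add_sub_cancel] at this
  linear_combination -this

theorem norm_mul_one_sub_comm (hP : IsStarProjection P) (hQ : IsStarProjection Q) :
    ‖P * (1 - Q)‖ = ‖(1 - Q) * P‖ := by
  rw [← norm_star, star_mul, hP.isSelfAdjoint.star_eq, hQ.one_sub.isSelfAdjoint.star_eq]

theorem norm_sub_le_max (hP : IsStarProjection P) (hQ : IsStarProjection Q) :
    ‖Q - P‖ ≤ max ‖(1 - P) * Q‖ ‖(1 - Q) * P‖ := by
  set m := max ‖(1 - P) * Q‖ ‖(1 - Q) * P‖
  have hm : 0 ≤ m := (norm_nonneg _).trans (le_max_left _ _)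
  refine ContinuousLinearMap.opNorm_le_bound _ hm fun x => ?_
  set a := Q x - P (Q x)
  set b := P (x - Q x)
  have hab : (Q - P) x = a - b := by
    simp only [a, b, _root_.sub_apply, map_sub]
    abel
  have ha : ‖a‖ ≤ m * ‖Q x‖ := by
    have : a = ((1 - P) * Q) (Q x) := by simp [a, mul_apply_eq_comp, hQ.apply_apply]
    exact this ▸ ((1 - P) * Q).le_opNorm _ |>.trans (by gcongr; exact le_max_left _ _)
  have hb : ‖b‖ ≤ m * ‖x - Q x‖ := by
    have : b = (P * (1 - Q)) (x - Q x) := by simp [b, mul_apply_eq_comp, hQ.apply_apply]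
    refine this ▸ (P * (1 - Q)).le_opNorm _ |>.trans ?_
    rw [hP.norm_mul_one_sub_comm hQ]
    gcongr
    exact le_max_right _ _
  have hsq : ‖a - b‖ ^ 2 ≤ (m * ‖x‖) ^ 2 := by
    have h := norm_sub_sq_eq_norm_sq_add_norm_sq_real (hP.inner_apply_sub_self (x - Q x) (Q x))
    have ha2 := pow_le_pow_left₀ (norm_nonneg a) ha 2
    have hb2 := pow_le_pow_left₀ (norm_nonneg b) hb 2
    rw [← sq, ← sq, ← sq] at h
    rw [mul_pow] at ha2 hb2
    rw [← norm_neg, neg_sub, h, mul_pow, ← hQ.norm_apply_sq_add_norm_sq x]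
    linarith
  rw [hab]
  exact (pow_le_pow_iff_left₀ (norm_nonneg _) (by positivity) two_ne_zero).mp hsq

theorem exists_singular_vectors [FiniteDimensional ℝ E] (hP : IsStarProjection P)
    (hQ : IsStarProjection Q) (hσ : 0 < ‖(1 - P) * Q‖) :
    ∃ v y : E, ‖v‖ = 1 ∧ ‖y‖ = 1 ∧ Q v = v ∧ P y = 0 ∧
      v - P v = ‖(1 - P) * Q‖ • y ∧ Q y = ‖(1 - P) * Q‖ • v := by
  set T := (1 - P) * Q
  set σ := ‖T‖
  obtain ⟨x, hx⟩ := ContinuousLinearMap.exists_ne_zero (norm_pos_iff.mp hσ)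
  have : Nontrivial E := ⟨⟨x, 0, fun h => hx (by rw [h, map_zero])⟩⟩
  obtain ⟨v, hv, hTv, hTTv⟩ := T.exists_norm_eq_one_adjoint_apply_eq
  have hTv_eq : T v = Q v - P (Q v) := by simp [T, mul_apply_eq_comp]
  have hPy : P (σ⁻¹ • T v) = 0 := by simp [hTv_eq, hP.apply_apply]
  have hQy : Q (σ⁻¹ • T v) = σ • v := by
    have hadj : ContinuousLinearMap.adjoint T = Q * (1 - P) := by
      rw [← ContinuousLinearMap.star_eq_adjoint, star_mul, hQ.isSelfAdjoint.star_eq,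
        hP.one_sub.isSelfAdjoint.star_eq]
    have := congr(σ⁻¹ • $hTTv)
    rw [← map_smul, hadj, smul_smul, sq, ← mul_assoc, inv_mul_cancel₀ hσ.ne', one_mul] at this
    rwa [mul_apply_eq_comp, _root_.sub_apply, one_apply_eq_self, hPy, sub_zero] at this
  have hQv : Q v = v := by
    refine smul_right_injective E hσ.ne' ?_
    simp only [← map_smul, ← hQy, hQ.apply_apply]
  refine ⟨v, σ⁻¹ • T v, hv, ?_, hQv, hPy, ?_, hQy⟩
  · rw [norm_smul, norm_inv, norm_norm, hTv, inv_mul_cancel₀ hσ.ne']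
  · rw [smul_smul, mul_inv_cancel₀ hσ.ne', one_smul, hTv_eq, hQv]

end IsStarProjection

/-- For the leading `p`-dimensional spectral projection `P` of a symmetric `A`, take
`lo = λ_p` and `hi = λ_{p+1}`. -/
structure IsGapProjection (A P : E →L[ℝ] E) (lo hi : ℝ) : Prop where
  isStarProjection : IsStarProjection P
  commute : Commute A P
  le_inner : ∀ x, P x = x → lo * ‖x‖ ^ 2 ≤ ⟪x, A x⟫
  inner_le : ∀ x, P x = 0 → ⟪x, A x⟫ ≤ hi * ‖x‖ ^ 2

namespace IsGapProjection

variable {A B P Q : E →L[ℝ] E} {loA hiA loB hiB : ℝ}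

theorem apply_apply_comm (hP : IsGapProjection A P loA hiA) (x : E) : A (P x) = P (A x) := by
  rw [← mul_apply_eq_comp, hP.commute.eq, mul_apply_eq_comp]

theorem norm_one_sub_mul_le [FiniteDimensional ℝ E] (hP : IsGapProjection A P loA hiA)
    (hQ : IsGapProjection B Q loB hiB) (hgap : hiA < loB) :
    ‖(1 - P) * Q‖ ≤ ‖B - A‖ / (loB - hiA) := by
  rw [le_div_iff₀ (sub_pos.2 hgap)]
  set σ := ‖(1 - P) * Q‖
  rcases (norm_nonneg _ : 0 ≤ σ).eq_or_lt with hσ | hσ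
  · rw [show σ = 0 from hσ.symm, zero_mul]
    exact norm_nonneg _
  obtain ⟨v, y, hv, hy, hQv, hPy, hPv, hQy⟩ :=
    hP.isStarProjection.exists_singular_vectors hQ.isStarProjection hσ
  have hAv : ⟪y, A v⟫ = σ * ⟪y, A y⟫ := by
    have h0 : ⟪y, A (P v)⟫ = 0 := by
      rw [hP.apply_apply_comm, ← hP.isStarProjection.inner_apply_left, hPy, inner_zero_left]
    rw [← sub_add_cancel v (P v), map_add, inner_add_right, h0, hPv, map_smul, inner_smul_right,
      add_zero]
  have hBv : ⟪y, B v⟫ = σ * ⟪v, B v⟫ := by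
    nth_rewrite 1 [← hQv]
    rw [hQ.apply_apply_comm, ← hQ.isStarProjection.inner_apply_left, hQy, real_inner_smul_left]
  calc σ * (loB - hiA) = σ * (loB * ‖v‖ ^ 2) - σ * (hiA * ‖y‖ ^ 2) := by
        rw [hv, hy]; ring
    _ ≤ σ * ⟪v, B v⟫ - σ * ⟪y, A y⟫ := by
        gcongr
        · exact hQ.le_inner v hQv
        · exact hP.inner_le y hPy
    _ = ⟪y, (B - A) v⟫ := by rw [_root_.sub_apply, inner_sub_right, hAv, hBv]
    _ ≤ ‖y‖ * ‖(B - A) v‖ := real_inner_le_norm _ _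
    _ ≤ ‖B - A‖ := by simpa [hy, hv] using (B - A).le_opNorm v

theorem norm_one_sub_mul_le_two_mul_div [FiniteDimensional ℝ E]
    (hP : IsGapProjection A P loA hiA) (hQ : IsGapProjection B Q loB hiB) {δ ε : ℝ}
    (hδ : 0 < δ) (hε : ‖B - A‖ ≤ ε) (hgap : δ - ε ≤ loB - hiA) :
    ‖(1 - P) * Q‖ ≤ 2 * ε / δ := by
  rcases le_or_gt δ (2 * ε) with hsmall | hlarge
  · calc ‖(1 - P) * Q‖ ≤ ‖1 - P‖ * ‖Q‖ := norm_mul_le _ _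
      _ ≤ 1 * 1 := by
        gcongr
        exacts [hP.isStarProjection.one_sub.norm_le, hQ.isStarProjection.norm_le]
      _ ≤ 2 * ε / δ := by rwa [one_mul, one_le_div hδ]
  · calc ‖(1 - P) * Q‖ ≤ ‖B - A‖ / (loB - hiA) := hP.norm_one_sub_mul_le hQ (by linarith)
      _ ≤ ε / (δ / 2) := by gcongr <;> linarith [(norm_nonneg _).trans hε]
      _ = 2 * ε / δ := by field_simp

theorem norm_sub_le_two_mul_div [FiniteDimensional ℝ E]
    (hP : IsGapProjection A P loA hiA) (hQ : IsGapProjection B Q loB hiB) {ε : ℝ}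
    (hgap : hiA < loA) (hε : ‖B - A‖ ≤ ε) (hlo : loA - ε ≤ loB) (hhi : hiB - ε ≤ hiA) :
    ‖Q - P‖ ≤ 2 * ε / (loA - hiA) := by
  refine (hP.isStarProjection.norm_sub_le_max hQ.isStarProjection).trans (max_le ?_ ?_)
  · exact hP.norm_one_sub_mul_le_two_mul_div hQ (sub_pos.2 hgap) hε (by linarith)
  · exact hQ.norm_one_sub_mul_le_two_mul_div hP (sub_pos.2 hgap) (norm_sub_rev A B ▸ hε)
      (by linarith)

end IsGapProjection

end Operator

section Matrix

variable {n : ℕ}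

theorem sum_Icc_one_eq_sum_fin {M : Type*} [AddCommMonoid M] (f : ℕ → M) :
    ∑ i ∈ Icc 1 n, f i = ∑ a : Fin n, f (a + 1) := by
  rw [Fin.sum_univ_eq_sum_range (fun i => f (i + 1)), range_eq_Ico, sum_Ico_add' f 0 n 1]
  rfl

theorem norm_toLp_sq (x : Fin n → ℝ) : ‖toLp 2 x‖ ^ 2 = x ⬝ᵥ x := by
  rw [← real_inner_self_eq_norm_sq, EuclideanSpace.inner_toLp_toLp, star_trivial]

theorem inner_toLp_toEuclideanCLM_toLp (M : Matrix (Fin n) (Fin n) ℝ) (x y : Fin n → ℝ) :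
    ⟪toLp 2 x, toEuclideanCLM (n := Fin n) (𝕜 := ℝ) M (toLp 2 y)⟫ = x ⬝ᵥ M *ᵥ y :=
  inner_toEuclideanCLM M _ _

theorem specNorm_eq_norm_toEuclideanCLM (M : Matrix (Fin n) (Fin n) ℝ) :
    specNorm M = ‖toEuclideanCLM (n := Fin n) (𝕜 := ℝ) M‖ := rfl

theorem specNorm_sub_comm (A B : Matrix (Fin n) (Fin n) ℝ) :
    specNorm (A - B) = specNorm (B - A) := by
  simp only [specNorm_eq_norm_toEuclideanCLM, map_sub, norm_sub_rev]

theorem abs_dotProduct_mulVec_self_le (M : Matrix (Fin n) (Fin n) ℝ) (x : Fin n → ℝ) :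
    |x ⬝ᵥ M *ᵥ x| ≤ specNorm M * (x ⬝ᵥ x) := by
  rw [← inner_toLp_toEuclideanCLM_toLp, ← norm_toLp_sq, specNorm_eq_norm_toEuclideanCLM]
  set T := toEuclideanCLM (n := Fin n) (𝕜 := ℝ) M
  calc |⟪toLp 2 x, T (toLp 2 x)⟫| ≤ ‖toLp 2 x‖ * ‖T (toLp 2 x)‖ := abs_real_inner_le_norm _ _
    _ ≤ ‖toLp 2 x‖ * (‖T‖ * ‖toLp 2 x‖) := by gcongr; exact T.le_opNorm _
    _ = ‖T‖ * ‖toLp 2 x‖ ^ 2 := by ring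

theorem exists_ne_zero_forall_dotProduct_eq_zero {K ι m : Type*} [Field K] [Fintype ι]
    [Fintype m] (v : ι → m → K) (h : Fintype.card ι < Fintype.card m) :
    ∃ x ≠ 0, ∀ i, v i ⬝ᵥ x = 0 := by
  have hker : LinearMap.ker (Matrix.of v).mulVecLin ≠ ⊥ :=
    LinearMap.ker_ne_bot_of_finrank_lt (by simpa [Module.finrank_fintype_fun_eq_card] using h)
  obtain ⟨x, hx, hx0⟩ := Submodule.ne_bot_iff _ |>.mp hker
  exact ⟨x, hx0, fun i => congr_fun hx i⟩

theorem dotProduct_sum_smul_vecMulVec_mulVec {ι m : Type*} [Fintype m] (s : Finset ι)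
    (c : ι → ℝ) (u : ι → m → ℝ) (x : m → ℝ) :
    x ⬝ᵥ (∑ i ∈ s, c i • vecMulVec (u i) (u i)) *ᵥ x = ∑ i ∈ s, c i * (u i ⬝ᵥ x) ^ 2 := by
  rw [sum_mulVec, dotProduct_sum]
  refine sum_congr rfl fun i _ => ?_
  rw [smul_mulVec, vecMulVec_mulVec, op_smul_eq_smul, dotProduct_smul, dotProduct_smul,
    dotProduct_comm x, smul_eq_mul, smul_eq_mul, sq]

section Orthonormal

variable {u : ℕ → Fin n → ℝ}
  (hu : ∀ i ∈ Icc 1 n, ∀ j ∈ Icc 1 n, u i ⬝ᵥ u j = if i = j then 1 else 0)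
include hu

theorem sum_vecMulVec_self_eq_one : ∑ i ∈ Icc 1 n, vecMulVec (u i) (u i) = 1 := by
  let U : Matrix (Fin n) (Fin n) ℝ := Matrix.of fun a => u (a + 1)
  have hmem (a : Fin n) : (a : ℕ) + 1 ∈ Icc 1 n := mem_Icc.mpr ⟨by omega, a.isLt⟩
  have hUU : U * Uᵀ = 1 := by
    ext a b
    rw [mul_apply', one_apply]
    change u (a + 1) ⬝ᵥ u (b + 1) = _
    simp [hu _ (hmem a) _ (hmem b), Fin.val_inj]
  -- a square matrix with orthonormal rows also has orthonormal columns
  rw [sum_Icc_one_eq_sum_fin, ← mul_eq_one_comm.mp hUU]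
  ext j k
  simp [U, Matrix.mul_apply, Matrix.sum_apply, vecMulVec_apply]

theorem dotProduct_self_eq_sum_sq (x : Fin n → ℝ) : x ⬝ᵥ x = ∑ i ∈ Icc 1 n, (u i ⬝ᵥ x) ^ 2 := by
  simpa [sum_vecMulVec_self_eq_one hu] using
    dotProduct_sum_smul_vecMulVec_mulVec (Icc 1 n) 1 u x

theorem vecMulVec_self_mul_vecMulVec_self {i j : ℕ} (hi : i ∈ Icc 1 n) (hj : j ∈ Icc 1 n) :
    vecMulVec (u i) (u i) * vecMulVec (u j) (u j) = if i = j then vecMulVec (u i) (u i) else 0 := by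
  rw [vecMulVec_mul_vecMulVec, hu i hi j hj]
  split_ifs with h
  · rw [h, one_smul]
  · rw [zero_smul]; ext; simp [vecMulVec_apply]

theorem dotProduct_sum_vecMulVec_self_mulVec {s : Finset ℕ} (hs : s ⊆ Icc 1 n) {j : ℕ}
    (hj : j ∈ Icc 1 n) (x : Fin n → ℝ) :
    u j ⬝ᵥ (∑ i ∈ s, vecMulVec (u i) (u i)) *ᵥ x = if j ∈ s then u j ⬝ᵥ x else 0 := by
  rw [sum_mulVec, dotProduct_sum, ← sum_ite_eq s j (fun _ => u j ⬝ᵥ x)]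
  refine sum_congr rfl fun i hi => ?_
  rw [vecMulVec_mulVec, op_smul_eq_smul, dotProduct_smul, hu j hj i (hs hi), smul_eq_mul]
  split_ifs <;> simp_all

theorem commute_vecMulVec_self {i j : ℕ} (hi : i ∈ Icc 1 n) (hj : j ∈ Icc 1 n) :
    Commute (vecMulVec (u i) (u i)) (vecMulVec (u j) (u j)) := by
  rw [Commute, SemiconjBy, vecMulVec_self_mul_vecMulVec_self hu hi hj,
    vecMulVec_self_mul_vecMulVec_self hu hj hi]
  by_cases hij : i = j
  · rw [if_pos hij, if_pos hij.symm, hij]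
  · rw [if_neg hij, if_neg (Ne.symm hij)]

theorem isStarProjection_sum_vecMulVec_self {s : Finset ℕ} (hs : s ⊆ Icc 1 n) :
    IsStarProjection (∑ i ∈ s, vecMulVec (u i) (u i)) where
  isIdempotentElem := by
    rw [IsIdempotentElem, sum_mul_sum]
    refine sum_congr rfl fun i hi => ?_
    rw [sum_congr rfl fun j hj => vecMulVec_self_mul_vecMulVec_self hu (hs hi) (hs hj),
      sum_ite_eq, if_pos hi]
  isSelfAdjoint := by
    simp [IsSelfAdjoint, star_eq_conjTranspose, conjTranspose_eq_transpose_of_trivial,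
      transpose_vecMulVec]

end Orthonormal

structure IsSpectralDecomposition (A : Matrix (Fin n) (Fin n) ℝ) (lam : ℕ → ℝ)
    (u : ℕ → Fin n → ℝ) : Prop where
  orthonormal : ∀ i ∈ Icc 1 n, ∀ j ∈ Icc 1 n, u i ⬝ᵥ u j = if i = j then 1 else 0
  eq_sum : A = ∑ i ∈ Icc 1 n, lam i • vecMulVec (u i) (u i)

namespace IsSpectralDecomposition

variable {A B : Matrix (Fin n) (Fin n) ℝ} {lam lamB : ℕ → ℝ} {u w : ℕ → Fin n → ℝ}

theorem mul_dotProduct_self_le (h : IsSpectralDecomposition A lam u) {c : ℝ} {x : Fin n → ℝ}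
    (hc : ∀ i ∈ Icc 1 n, u i ⬝ᵥ x ≠ 0 → c ≤ lam i) : c * (x ⬝ᵥ x) ≤ x ⬝ᵥ A *ᵥ x := by
  rw [dotProduct_self_eq_sum_sq h.orthonormal, mul_sum, h.eq_sum,
    dotProduct_sum_smul_vecMulVec_mulVec]
  refine sum_le_sum fun i hi => ?_
  by_cases hx : u i ⬝ᵥ x = 0
  · simp [hx]
  · exact mul_le_mul_of_nonneg_right (hc i hi hx) (sq_nonneg _)

theorem dotProduct_mulVec_le (h : IsSpectralDecomposition A lam u) {c : ℝ} {x : Fin n → ℝ}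
    (hc : ∀ i ∈ Icc 1 n, u i ⬝ᵥ x ≠ 0 → lam i ≤ c) : x ⬝ᵥ A *ᵥ x ≤ c * (x ⬝ᵥ x) := by
  rw [dotProduct_self_eq_sum_sq h.orthonormal, mul_sum, h.eq_sum,
    dotProduct_sum_smul_vecMulVec_mulVec]
  refine sum_le_sum fun i hi => ?_
  by_cases hx : u i ⬝ᵥ x = 0
  · simp [hx]
  · exact mul_le_mul_of_nonneg_right (hc i hi hx) (sq_nonneg _)

theorem sub_specNorm_sub_le (hA : IsSpectralDecomposition A lam u)
    (hB : IsSpectralDecomposition B lamB w) (hlam : AntitoneOn lam (Icc 1 n : Finset ℕ))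
    (hlamB : AntitoneOn lamB (Icc 1 n : Finset ℕ)) {k : ℕ} (hk : k ∈ Icc 1 n) :
    lam k - specNorm (B - A) ≤ lamB k := by
  obtain ⟨hk1, hkn⟩ := mem_Icc.mp hk
  obtain ⟨x, hx0, hx⟩ := exists_ne_zero_forall_dotProduct_eq_zero
    (Sum.elim (fun i : Ioc k n => u i) (fun j : Ico 1 k => w j))
    (by simp only [Fintype.card_sum, Fintype.card_coe, Nat.card_Ioc, Nat.card_Ico,
      Fintype.card_fin]; omega)
  have hxx : 0 < x ⬝ᵥ x := by
    rw [← norm_toLp_sq]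
    exact pow_pos (norm_pos_iff.mpr (by simpa using hx0)) 2
  have hAx : lam k * (x ⬝ᵥ x) ≤ x ⬝ᵥ A *ᵥ x := hA.mul_dotProduct_self_le fun i hi hix =>
    hlam hi hk (not_lt.mp fun hki => hix (hx (.inl ⟨i, mem_Ioc.mpr ⟨hki, (mem_Icc.mp hi).2⟩⟩)))
  have hBx : x ⬝ᵥ B *ᵥ x ≤ lamB k * (x ⬝ᵥ x) := hB.dotProduct_mulVec_le fun j hj hjx =>
    hlamB hk hj (not_lt.mp fun hjk => hjx (hx (.inr ⟨j, mem_Ico.mpr ⟨(mem_Icc.mp hj).1, hjk⟩⟩)))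
  have hE := neg_le_of_abs_le (abs_dotProduct_mulVec_self_le (B - A) x)
  rw [sub_mulVec, dotProduct_sub] at hE
  refine le_of_mul_le_mul_right ?_ hxx
  linarith

theorem commute_sum_vecMulVec_self (h : IsSpectralDecomposition A lam u) {s : Finset ℕ}
    (hs : s ⊆ Icc 1 n) : Commute A (∑ i ∈ s, vecMulVec (u i) (u i)) := by
  rw [h.eq_sum]
  exact Commute.sum_left _ _ _ fun i hi => Commute.sum_right _ _ _ fun j hj =>
    (commute_vecMulVec_self h.orthonormal hi (hs hj)).smul_left _

theorem isGapProjection (h : IsSpectralDecomposition A lam u)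
    (hlam : AntitoneOn lam (Icc 1 n : Finset ℕ)) {p : ℕ} (hp1 : 1 ≤ p) (hpn : p + 1 ≤ n) :
    IsGapProjection (toEuclideanCLM (n := Fin n) (𝕜 := ℝ) A)
      (toEuclideanCLM (n := Fin n) (𝕜 := ℝ) (∑ i ∈ Icc 1 p, vecMulVec (u i) (u i)))
      (lam p) (lam (p + 1)) := by
  have hsub : Icc 1 p ⊆ Icc 1 n := Icc_subset_Icc le_rfl (by omega)
  have hcoord {i : ℕ} (hi : i ∈ Icc 1 n) (x : Fin n → ℝ) :=
    dotProduct_sum_vecMulVec_self_mulVec h.orthonormal hsub hi x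
  refine ⟨(isStarProjection_sum_vecMulVec_self h.orthonormal hsub).map _,
    (h.commute_sum_vecMulVec_self hsub).map _, ?_, ?_⟩
  · rintro ⟨x⟩ hx
    rw [toEuclideanCLM_toLp, (toLp_injective 2).eq_iff] at hx
    rw [inner_toLp_toEuclideanCLM_toLp, norm_toLp_sq]
    refine h.mul_dotProduct_self_le fun i hi hix => hlam hi (mem_Icc.mpr ⟨hp1, by omega⟩) ?_
    by_contra! hip
    rw [← hx, hcoord hi, if_neg (by simp; omega)] at hix
    exact hix rfl
  · rintro ⟨x⟩ hx
    rw [toEuclideanCLM_toLp, toLp_eq_zero] at hx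
    rw [inner_toLp_toEuclideanCLM_toLp, norm_toLp_sq]
    refine h.dotProduct_mulVec_le fun i hi hix => hlam (mem_Icc.mpr ⟨by omega, hpn⟩) hi ?_
    by_contra! hip
    have := hcoord hi x
    rw [hx, dotProduct_zero, if_pos (by simp at hi ⊢; omega)] at this
    exact hix this.symm

end IsSpectralDecomposition

end Matrix

/-- **Davis–Kahan.**  Let `A` and `Ã = A + E` be `n × n` real symmetric matrices,
with spectral decompositions `A = ∑_{i=1}^n λ_i u_i u_iᵀ` and
`Ã = ∑_{i=1}^n λ̃_i ũ_i ũ_iᵀ` (eigenvalues ordered decreasingly, eigenvectors orthonormal).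
If `δ_p := λ_p − λ_{p+1} > 0`, then the orthogonal projections
`Π_p = ∑_{i=1}^p u_i u_iᵀ` and `Π̃_p = ∑_{i=1}^p ũ_i ũ_iᵀ` onto the leading `p`-dimensional
eigenspaces satisfy `‖Π̃_p − Π_p‖ ≤ 2 ‖E‖ / δ_p`. -/
theorem davis_kahan {n : ℕ} (A E : Matrix (Fin n) (Fin n) ℝ)
    (p : ℕ) (hp1 : 1 ≤ p) (hpn : p + 1 ≤ n)
    (lamA : ℕ → ℝ) (u : ℕ → Fin n → ℝ)
    (lamB : ℕ → ℝ) (w : ℕ → Fin n → ℝ)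
    (hAdec : ∀ i ∈ Finset.Icc 1 n, ∀ j ∈ Finset.Icc 1 n, i ≤ j → lamA j ≤ lamA i)
    (hAon : ∀ i ∈ Finset.Icc 1 n, ∀ j ∈ Finset.Icc 1 n,
      u i ⬝ᵥ u j = if i = j then 1 else 0)
    (hAeq : A = ∑ i ∈ Finset.Icc 1 n, lamA i • Matrix.vecMulVec (u i) (u i))
    (hBdec : ∀ i ∈ Finset.Icc 1 n, ∀ j ∈ Finset.Icc 1 n, i ≤ j → lamB j ≤ lamB i)
    (hBon : ∀ i ∈ Finset.Icc 1 n, ∀ j ∈ Finset.Icc 1 n,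
      w i ⬝ᵥ w j = if i = j then 1 else 0)
    (hBeq : A + E = ∑ i ∈ Finset.Icc 1 n, lamB i • Matrix.vecMulVec (w i) (w i))
    (hgap : 0 < lamA p - lamA (p + 1)) :
    specNorm
        ((∑ i ∈ Finset.Icc 1 p, Matrix.vecMulVec (w i) (w i)) -
          (∑ i ∈ Finset.Icc 1 p, Matrix.vecMulVec (u i) (u i))) ≤
      2 * specNorm E / (lamA p - lamA (p + 1)) := by
  have hA : IsSpectralDecomposition A lamA u := ⟨hAon, hAeq⟩
  have hB : IsSpectralDecomposition (A + E) lamB w := ⟨hBon, hBeq⟩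
  have hweyl₁ := hA.sub_specNorm_sub_le hB hAdec hBdec (mem_Icc.mpr ⟨hp1, by omega⟩)
  have hweyl₂ := hB.sub_specNorm_sub_le hA hBdec hAdec (mem_Icc.mpr ⟨by omega, hpn⟩)
  rw [add_sub_cancel_left] at hweyl₁
  rw [specNorm_sub_comm, add_sub_cancel_left] at hweyl₂
  rw [specNorm_eq_norm_toEuclideanCLM, map_sub]
  exact (hA.isGapProjection hAdec hp1 hpn).norm_sub_le_two_mul_div
    (hB.isGapProjection hBdec hp1 hpn) (sub_pos.mp hgap)
    (by rw [← map_sub, add_sub_cancel_left, specNorm_eq_norm_toEuclideanCLM]) hweyl₁ hweyl₂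
end

section
/- Let Γ be the circle of center c ∈ ℂ and radius R > 0. Let a_1, …, a_l, a_{l+1}, …, a_m (1 ≤ l < m) be pairwise distinct points in ℂ such that X = {a_1,…,a_l} are inside Γ and Y = {a_{l+1},…,a_m} are outside Γ. Let t_1,…,t_m be nonnegative integers, s := ∑_{i=1}^m t_i, t := t_m, δ := min_{i ≤ l < j} |a_i − a_j|, and λ := min_{i ≤ l} |a_i − a_m|. Then |(1/(2πi)) ∮_Γ dz/∏_{i=1}^m (z − a_i)^{t_i}| ≤ 2^{s−1}/(λ^t δ^{s−t−1}). -/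
/-
Write `I(t)` for `(2πi)⁻¹ ∮ dz / ∏ (z - a_k)^{t_k}` and `B(s, τ) = 2^{s-1} / (λ^τ δ^{s-τ-1})`.
If `a_i` is inside and `a_j` outside with `t_i, t_j > 0`, the partial fraction identity
`1/((z - a_i)(z - a_j)) = (a_i - a_j)⁻¹ (1/(z - a_i) - 1/(z - a_j))` gives
`I(t) = (a_i - a_j)⁻¹ (I(t - e_j) - I(t - e_i))`, which lowers `s` by one. Pairing with `j = m`
when `t_m > 0` costs a factor `λ⁻¹`, otherwise `δ⁻¹`, and since `δ ≤ λ` the bound `B(s, t_m)`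
propagates by induction on `s`. The recursion stops when all poles lie on one side of `Γ`:
with no pole inside `I = 0` by Cauchy's theorem; with all poles inside `I = 1` for `s = 1`, while
for `s ≥ 2` the contour can be pushed to infinity, where the integrand is `O(|z|⁻²)`, so `I = 0`.
-/

open Complex Metric Filter Topology

lemma tendsto_mul_add_div_sq_atTop_zero (A R : ℝ) :
    Tendsto (fun u : ℝ => A * (R + u) / u ^ 2) atTop (𝓝 0) := by
  have h : Tendsto (fun u : ℝ => A * (R * u⁻¹ ^ 2 + u⁻¹)) atTop (𝓝 0) := by
    simpa using
      ((tendsto_inv_atTop_zero.pow 2).const_mul R |>.add tendsto_inv_atTop_zero).const_mul A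
  refine h.congr' ((eventually_gt_atTop 0).mono fun u hu => ?_)
  field_simp

theorem circleIntegral_eq_zero_of_norm_le_inv_sq {E : Type*} [NormedAddCommGroup E]
    [NormedSpace ℂ E] [CompleteSpace E] {f : ℂ → E} {c : ℂ} {R : ℝ} (hR : 0 < R)
    (hf : ∀ z, R ≤ ‖z - c‖ → DifferentiableAt ℂ f z)
    (hbound : ∀ u ≥ 1, ∀ z ∈ sphere c (R + u), ‖f z‖ ≤ (u ^ 2)⁻¹) :
    ∮ z in C(c, R), f z = 0 := by
  have hle : ∀ u ≥ 1, ‖∮ z in C(c, R), f z‖ ≤ 2 * Real.pi * (R + u) / u ^ 2 := fun u hu => by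
    have hc : ContinuousOn f (closedBall c (R + u) \ ball c R) := fun z hz =>
      (hf z (not_lt.1 fun h => hz.2 (mem_ball_iff_norm.2 h))).continuousAt.continuousWithinAt
    have hd : ∀ z ∈ (ball c (R + u) \ closedBall c R) \ ∅, DifferentiableAt ℂ f z := fun z hz =>
      hf z (not_le.1 fun h => hz.1.2 (mem_closedBall_iff_norm.2 h)).le
    rw [← circleIntegral_eq_of_differentiable_on_annulus_off_countable hR (by linarith)
      Set.countable_empty hc hd, div_eq_mul_inv]
    exact circleIntegral.norm_integral_le_of_norm_le_const (by linarith) (hbound u hu)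
  exact norm_le_zero_iff.1 <| ge_of_tendsto (tendsto_mul_add_div_sq_atTop_zero _ R)
    ((eventually_ge_atTop 1).mono hle)

section MixedPoleBound

noncomputable def mixedPoleBound (δ lam : ℝ) (s τ : ℤ) : ℝ :=
  2 ^ (s - 1) / (lam ^ τ * δ ^ (s - τ - 1))

variable {δ lam : ℝ}

lemma mixedPoleBound_pos (hδ : 0 < δ) (hlam : 0 < lam) (s τ : ℤ) :
    0 < mixedPoleBound δ lam s τ := by
  unfold mixedPoleBound; positivity

lemma mixedPoleBound_add_one (hδ : δ ≠ 0) (s τ : ℤ) :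
    mixedPoleBound δ lam (s + 1) τ = 2 * δ⁻¹ * mixedPoleBound δ lam s τ := by
  unfold mixedPoleBound
  rw [show s + 1 - τ - 1 = (s - τ - 1) + 1 by ring, zpow_add_one₀ hδ, add_sub_cancel_right,
    show s = (s - 1) + 1 by ring, zpow_add_one₀ two_ne_zero, add_sub_cancel_right]
  field_simp

lemma mixedPoleBound_add_one_sub_one (hlam : lam ≠ 0) (s τ : ℤ) :
    mixedPoleBound δ lam (s + 1) τ = 2 * lam⁻¹ * mixedPoleBound δ lam s (τ - 1) := by
  unfold mixedPoleBound
  rw [show s + 1 - τ - 1 = s - (τ - 1) - 1 by ring, show τ = (τ - 1) + 1 by ring,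
    zpow_add_one₀ hlam, add_sub_cancel_right, add_sub_cancel_right,
    show s = (s - 1) + 1 by ring, zpow_add_one₀ two_ne_zero, add_sub_cancel_right]
  field_simp

lemma inv_mul_add_mixedPoleBound_le (hδ : 0 < δ) (hδlam : δ ≤ lam) (s τ : ℤ) :
    lam⁻¹ * (mixedPoleBound δ lam s (τ - 1) + mixedPoleBound δ lam s τ) ≤
      mixedPoleBound δ lam (s + 1) τ := by
  have hlam := hδ.trans_le hδlam
  -- `λ⁻¹ B(s, τ - 1)` and `δ⁻¹ B(s, τ)` are each half of `B(s + 1, τ)`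
  have hδ' := mixedPoleBound_add_one (lam := lam) hδ.ne' s τ
  have hlam' := mixedPoleBound_add_one_sub_one (δ := δ) hlam.ne' s τ
  have hinv : lam⁻¹ * mixedPoleBound δ lam s τ ≤ δ⁻¹ * mixedPoleBound δ lam s τ := by
    gcongr
    exact (mixedPoleBound_pos hδ hlam _ _).le
  linarith

end MixedPoleBound

section PoleIntegral

variable {ι : Type*} {S : Finset ι} {a : ι → ℂ} {c : ℂ} {R : ℝ} {t : ι → ℕ}

noncomputable def poleIntegral (S : Finset ι) (a : ι → ℂ) (c : ℂ) (R : ℝ) (t : ι → ℕ) : ℂ :=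
  (2 * (Real.pi : ℂ) * I)⁻¹ * ∮ z in C(c, R), (∏ k ∈ S, (z - a k) ^ t k)⁻¹

lemma prod_sub_pow_ne_zero {z : ℂ} (hz : ∀ k ∈ S, t k ≠ 0 → z ≠ a k) :
    ∏ k ∈ S, (z - a k) ^ t k ≠ 0 :=
  Finset.prod_ne_zero_iff.2 fun k hk => by
    by_cases htk : t k = 0
    · simp [htk]
    · exact pow_ne_zero _ (sub_ne_zero.2 (hz k hk htk))

lemma differentiableAt_inv_prod_sub_pow {z : ℂ} (hz : ∀ k ∈ S, t k ≠ 0 → z ≠ a k) :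
    DifferentiableAt ℂ (fun w => (∏ k ∈ S, (w - a k) ^ t k)⁻¹) z :=
  (DifferentiableAt.fun_finsetProd fun _ _ => (differentiableAt_id.sub_const _).pow _).inv
    (prod_sub_pow_ne_zero hz)

lemma prod_sub_pow_eq_mul [DecidableEq ι] {j : ι} (hj : j ∈ S) (htj : t j ≠ 0) (z : ℂ) :
    ∏ k ∈ S, (z - a k) ^ t k =
      (∏ k ∈ S, (z - a k) ^ Function.update t j (t j - 1) k) * (z - a j) := by
  simp_rw [Function.apply_update (fun k n => (z - a k) ^ n)]
  rw [Finset.prod_update_of_mem hj, Finset.sdiff_singleton_eq_erase, mul_right_comm, ← pow_succ,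
    Nat.sub_add_cancel (Nat.one_le_iff_ne_zero.2 htj)]
  exact (Finset.mul_prod_erase S (fun k => (z - a k) ^ t k) hj).symm

lemma inv_prod_sub_pow_eq_inv_sub_mul [DecidableEq ι] {i j : ι} (hi : i ∈ S) (hj : j ∈ S)
    (hti : t i ≠ 0) (htj : t j ≠ 0) (hij : a i ≠ a j) {z : ℂ}
    (hz : ∏ k ∈ S, (z - a k) ^ t k ≠ 0) :
    (∏ k ∈ S, (z - a k) ^ t k)⁻¹ =
      (a i - a j)⁻¹ * ((∏ k ∈ S, (z - a k) ^ Function.update t j (t j - 1) k)⁻¹ -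
        (∏ k ∈ S, (z - a k) ^ Function.update t i (t i - 1) k)⁻¹) := by
  have hzi : z - a i ≠ 0 := right_ne_zero_of_mul (prod_sub_pow_eq_mul hi hti z ▸ hz)
  have hzj : z - a j ≠ 0 := right_ne_zero_of_mul (prod_sub_pow_eq_mul hj htj z ▸ hz)
  rw [eq_div_iff_mul_eq hzi |>.2 (prod_sub_pow_eq_mul hi hti z).symm,
    eq_div_iff_mul_eq hzj |>.2 (prod_sub_pow_eq_mul hj htj z).symm]
  field_simp [sub_ne_zero.2 hij]
  ring

lemma sum_update_pred_add_one [DecidableEq ι] {j : ι} (hj : j ∈ S) (htj : t j ≠ 0) :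
    ∑ k ∈ S, Function.update t j (t j - 1) k + 1 = ∑ k ∈ S, t k := by
  rw [Finset.sum_update_of_mem hj, Finset.sdiff_singleton_eq_erase, add_right_comm,
    Nat.sub_add_cancel (Nat.one_le_iff_ne_zero.2 htj), Finset.add_sum_erase S _ hj]

lemma poleIntegral_eq_zero_of_poles_outside (hR : 0 ≤ R)
    (h : ∀ k ∈ S, t k ≠ 0 → R < ‖a k - c‖) : poleIntegral S a c R t = 0 := by
  have hd : ∀ z ∈ closedBall c R, DifferentiableAt ℂ (fun w => (∏ k ∈ S, (w - a k) ^ t k)⁻¹) z :=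
    fun z hz => differentiableAt_inv_prod_sub_pow fun k hk htk hzk => by
      rw [mem_closedBall_iff_norm, hzk] at hz
      exact (h k hk htk).not_ge hz
  rw [poleIntegral, circleIntegral_eq_zero_of_differentiable_on_off_countable hR
    Set.countable_empty (fun z hz => (hd z hz).continuousAt.continuousWithinAt)
    (fun z hz => hd z (ball_subset_closedBall hz.1)), mul_zero]

lemma poleIntegral_eq_one_of_sum_eq_one (h : ∀ k ∈ S, t k ≠ 0 → ‖a k - c‖ < R)
    (hs : ∑ k ∈ S, t k = 1) : poleIntegral S a c R t = 1 := by
  classical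
  obtain ⟨i, hi, hti⟩ := Finset.exists_ne_zero_of_sum_ne_zero (hs ▸ one_ne_zero)
  have hsplit := Finset.add_sum_erase S t hi
  have hti1 : t i = 1 := by omega
  have hrest : ∑ k ∈ S.erase i, t k = 0 := by omega
  have hprod : ∀ z, ∏ k ∈ S, (z - a k) ^ t k = z - a i := fun z => by
    rw [← Finset.mul_prod_erase S _ hi, hti1, pow_one, Finset.prod_eq_one fun k hk => by
      rw [Finset.sum_eq_zero_iff.1 hrest k hk, pow_zero], mul_one]
  have hball : a i ∈ ball c R := mem_ball_iff_norm.2 (h i hi hti)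
  simp only [poleIntegral, hprod, circleIntegral.integral_sub_inv_of_mem_ball hball]
  exact inv_mul_cancel₀ (by simp [Real.pi_ne_zero, I_ne_zero])

lemma pow_sum_le_norm_prod_sub_pow {z : ℂ} {u : ℝ} (hu : 0 ≤ u)
    (h : ∀ k ∈ S, t k ≠ 0 → u ≤ ‖z - a k‖) :
    u ^ (∑ k ∈ S, t k) ≤ ‖∏ k ∈ S, (z - a k) ^ t k‖ := by
  rw [← Finset.prod_pow_eq_pow_sum, norm_prod]
  refine Finset.prod_le_prod (fun _ _ => by positivity) fun k hk => ?_
  by_cases htk : t k = 0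
  · simp [htk]
  · rw [norm_pow]
    exact pow_le_pow_left₀ hu (h k hk htk) _

lemma poleIntegral_eq_zero_of_poles_mem_ball (hR : 0 < R)
    (h : ∀ k ∈ S, t k ≠ 0 → ‖a k - c‖ < R) (hs : 2 ≤ ∑ k ∈ S, t k) :
    poleIntegral S a c R t = 0 := by
  have hfar : ∀ z u, R + u ≤ ‖z - c‖ → ∀ k ∈ S, t k ≠ 0 → u < ‖z - a k‖ := by
    intro z u hz k hk htk
    have := norm_sub_norm_le (z - c) (a k - c)
    rw [sub_sub_sub_cancel_right] at this
    linarith [h k hk htk]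
  rw [poleIntegral, circleIntegral_eq_zero_of_norm_le_inv_sq hR
    (fun z hz => differentiableAt_inv_prod_sub_pow fun k hk htk hzk => ?_)
    (fun u hu z hz => ?_), mul_zero]
  · have := hfar z 0 (by simpa using hz) k hk htk
    rw [hzk, sub_self, norm_zero] at this
    exact this.false
  · rw [norm_inv]
    refine inv_anti₀ (by positivity) ?_
    calc u ^ 2 ≤ u ^ (∑ k ∈ S, t k) := pow_le_pow_right₀ hu hs
      _ ≤ _ := pow_sum_le_norm_prod_sub_pow (by linarith) fun k hk htk =>
          (hfar z u (mem_sphere_iff_norm.1 hz).ge k hk htk).le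

lemma poleIntegral_eq_inv_sub_mul [DecidableEq ι] (hR : 0 ≤ R) (hS : ∀ k ∈ S, ‖a k - c‖ ≠ R)
    {i j : ι} (hi : i ∈ S) (hj : j ∈ S) (hti : t i ≠ 0) (htj : t j ≠ 0) (hij : a i ≠ a j) :
    poleIntegral S a c R t = (a i - a j)⁻¹ *
      (poleIntegral S a c R (Function.update t j (t j - 1)) -
        poleIntegral S a c R (Function.update t i (t i - 1))) := by
  have hoff : ∀ z ∈ sphere c R, ∀ u : ι → ℕ, ∀ k ∈ S, u k ≠ 0 → z ≠ a k :=
    fun z hz _ k hk _ hzk => hS k hk (hzk ▸ mem_sphere_iff_norm.1 hz)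
  have hint (u : ι → ℕ) : CircleIntegrable (fun z => (∏ k ∈ S, (z - a k) ^ u k)⁻¹) c R :=
    ContinuousOn.circleIntegrable hR fun z hz =>
      (differentiableAt_inv_prod_sub_pow (hoff z hz u)).continuousAt.continuousWithinAt
  rw [poleIntegral, circleIntegral.integral_congr hR fun z hz =>
      inv_prod_sub_pow_eq_inv_sub_mul hi hj hti htj hij (prod_sub_pow_ne_zero (hoff z hz t)),
    circleIntegral.integral_const_mul, circleIntegral.integral_sub (hint _) (hint _),
    poleIntegral, poleIntegral]
  ring

lemma norm_poleIntegral_le_of_pole_pair [DecidableEq ι] (hR : 0 ≤ R)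
    (hS : ∀ k ∈ S, ‖a k - c‖ ≠ R) {i j : ι} (hi : i ∈ S) (hj : j ∈ S) (hti : t i ≠ 0)
    (htj : t j ≠ 0) {μ A B : ℝ} (hμ : 0 < μ) (hμij : μ ≤ ‖a i - a j‖)
    (hA : ‖poleIntegral S a c R (Function.update t j (t j - 1))‖ ≤ A)
    (hB : ‖poleIntegral S a c R (Function.update t i (t i - 1))‖ ≤ B) :
    ‖poleIntegral S a c R t‖ ≤ μ⁻¹ * (A + B) := by
  have hij : a i ≠ a j := sub_ne_zero.1 (norm_pos_iff.1 (hμ.trans_le hμij))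
  rw [poleIntegral_eq_inv_sub_mul hR hS hi hj hti htj hij, norm_mul, norm_inv]
  gcongr
  exact (norm_sub_le _ _).trans (add_le_add hA hB)

lemma norm_poleIntegral_le_mixedPoleBound_of_poles_mem_ball {δ lam : ℝ} (hδ : 0 < δ)
    (hlam : 0 < lam) (hR : 0 < R) (h : ∀ k ∈ S, t k ≠ 0 → ‖a k - c‖ < R) {n : ℕ}
    (hs : ∑ k ∈ S, t k = n + 1) :
    ‖poleIntegral S a c R t‖ ≤ mixedPoleBound δ lam (n + 1) 0 := by
  rcases n with _ | n
  · rw [poleIntegral_eq_one_of_sum_eq_one h hs]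
    simp [mixedPoleBound]
  · rw [poleIntegral_eq_zero_of_poles_mem_ball hR h (by omega), norm_zero]
    exact (mixedPoleBound_pos hδ hlam _ _).le

lemma norm_poleIntegral_le_mixedPoleBound_add_one [DecidableEq ι] {X Y : Finset ι} {m : ι}
    (hm : m ∈ Y) (hR : 0 ≤ R) (hX : ∀ i ∈ X, ‖a i - c‖ < R) (hY : ∀ j ∈ Y, R < ‖a j - c‖)
    {δ lam : ℝ} (hδ : 0 < δ) (hδlam : δ ≤ lam) (hδX : ∀ i ∈ X, ∀ j ∈ Y, δ ≤ ‖a i - a j‖)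
    (hlamX : ∀ i ∈ X, lam ≤ ‖a i - a m‖) {i j : ι} (hiX : i ∈ X) (hjY : j ∈ Y) (hti : t i ≠ 0)
    (htj : t j ≠ 0) {n : ℤ}
    (ih : ∀ k ∈ X ∪ Y, t k ≠ 0 →
      ‖poleIntegral (X ∪ Y) a c R (Function.update t k (t k - 1))‖ ≤
        mixedPoleBound δ lam n (Function.update t k (t k - 1) m)) :
    ‖poleIntegral (X ∪ Y) a c R t‖ ≤ mixedPoleBound δ lam (n + 1) (t m) := by
  have hS : ∀ k ∈ X ∪ Y, ‖a k - c‖ ≠ R := fun k hk =>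
    (Finset.mem_union.1 hk).elim (fun hk => (hX k hk).ne) fun hk => (hY k hk).ne'
  have hmi : m ≠ i := by rintro rfl; exact (hX m hiX).not_gt (hY m hm)
  have hIHi := ih i (Finset.mem_union_left _ hiX) hti
  rw [Function.update_of_ne hmi] at hIHi
  by_cases htm : t m = 0
  · have hmj : m ≠ j := by rintro rfl; exact htj htm
    have hIHj := ih j (Finset.mem_union_right _ hjY) htj
    rw [Function.update_of_ne hmj, htm, Nat.cast_zero] at hIHj
    rw [htm, Nat.cast_zero] at hIHi ⊢
    refine (norm_poleIntegral_le_of_pole_pair hR hS (Finset.mem_union_left _ hiX)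
      (Finset.mem_union_right _ hjY) hti htj hδ (hδX i hiX j hjY) hIHj hIHi).trans_eq ?_
    rw [mixedPoleBound_add_one hδ.ne']
    ring
  · have hIHm := ih m (Finset.mem_union_right _ hm) htm
    rw [Function.update_self, Nat.cast_pred (Nat.pos_of_ne_zero htm)] at hIHm
    exact (norm_poleIntegral_le_of_pole_pair hR hS (Finset.mem_union_left _ hiX)
      (Finset.mem_union_right _ hm) hti htm (hδ.trans_le hδlam) (hlamX i hiX) hIHm hIHi).trans
      (inv_mul_add_mixedPoleBound_le hδ hδlam _ _)

theorem norm_poleIntegral_le_mixedPoleBound [DecidableEq ι] {X Y : Finset ι} {m : ι}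
    (hm : m ∈ Y) (hR : 0 < R) (hX : ∀ i ∈ X, ‖a i - c‖ < R) (hY : ∀ j ∈ Y, R < ‖a j - c‖)
    {δ lam : ℝ} (hδ : 0 < δ) (hδlam : δ ≤ lam) (hδX : ∀ i ∈ X, ∀ j ∈ Y, δ ≤ ‖a i - a j‖)
    (hlamX : ∀ i ∈ X, lam ≤ ‖a i - a m‖) (t : ι → ℕ) :
    ‖poleIntegral (X ∪ Y) a c R t‖ ≤ mixedPoleBound δ lam ((∑ k ∈ X ∪ Y, t k : ℕ) : ℤ) (t m) := by
  have hlam := hδ.trans_le hδlam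
  obtain ⟨n, hn⟩ : ∃ n, ∑ k ∈ X ∪ Y, t k = n := ⟨_, rfl⟩
  induction n generalizing t with
  | zero =>
    rw [poleIntegral_eq_zero_of_poles_outside hR.le fun k hk htk =>
      absurd (Finset.sum_eq_zero_iff.1 hn k hk) htk, norm_zero]
    exact (mixedPoleBound_pos hδ hlam _ _).le
  | succ n ih =>
    rw [hn, Nat.cast_succ]
    by_cases hXpole : ∃ i ∈ X, t i ≠ 0
    swap
    · push Not at hXpole
      rw [poleIntegral_eq_zero_of_poles_outside hR.le fun k hk htk => ?_, norm_zero]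
      · exact (mixedPoleBound_pos hδ hlam _ _).le
      · exact (Finset.mem_union.1 hk).elim (fun hk => absurd (hXpole k hk) htk) (hY k)
    by_cases hYpole : ∃ j ∈ Y, t j ≠ 0
    swap
    · push Not at hYpole
      rw [hYpole m hm, Nat.cast_zero]
      refine norm_poleIntegral_le_mixedPoleBound_of_poles_mem_ball hδ hlam hR
        (fun k hk htk => ?_) hn
      exact (Finset.mem_union.1 hk).elim (hX k) fun hk => absurd (hYpole k hk) htk
    obtain ⟨i, hiX, hti⟩ := hXpole
    obtain ⟨j, hjY, htj⟩ := hYpole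
    refine norm_poleIntegral_le_mixedPoleBound_add_one hm hR.le hX hY hδ hδlam hδX hlamX hiX hjY
      hti htj fun k hk htk => ?_
    have hsum : ∑ l ∈ X ∪ Y, Function.update t k (t k - 1) l = n := by
      have := sum_update_pred_add_one hk htk
      omega
    simpa only [hsum] using ih _ hsum

end PoleIntegral

lemma sInf_norm_sub_pos {ι : Type*} {X Y : Finset ι} {a : ι → ℂ} (hX : X.Nonempty)
    (hY : Y.Nonempty) (hsep : ∀ i ∈ X, ∀ j ∈ Y, a i ≠ a j) :
    0 < sInf {d : ℝ | ∃ i ∈ X, ∃ j ∈ Y, d = ‖a i - a j‖} := by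
  obtain ⟨i, hi⟩ := hX
  obtain ⟨j, hj⟩ := hY
  have hfin : {d : ℝ | ∃ i ∈ X, ∃ j ∈ Y, d = ‖a i - a j‖}.Finite :=
    (X.finite_toSet.image2 (fun i j => ‖a i - a j‖) Y.finite_toSet).subset
      (by rintro _ ⟨i, hi, j, hj, rfl⟩; exact ⟨i, hi, j, hj, rfl⟩)
  obtain ⟨i', hi', j', hj', hd⟩ := Set.Nonempty.csInf_mem (by exact ⟨_, i, hi, j, hj, rfl⟩) hfin
  rw [hd]
  exact norm_pos_iff.2 (sub_ne_zero.2 (hsep i' hi' j' hj'))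

theorem contour_mixed_poles_bound_general {m l : ℕ} (hl1 : 1 ≤ l) (hlm : l < m)
    (c : ℂ) (R : ℝ) (hR : 0 < R) (a : ℕ → ℂ)
    (hin : ∀ i ∈ Finset.Icc 1 l, ‖a i - c‖ < R)
    (hout : ∀ j ∈ Finset.Icc (l + 1) m, R < ‖a j - c‖)
    (t : ℕ → ℕ) :
    ‖(2 * (Real.pi : ℂ) * Complex.I)⁻¹ *
        (∮ z in C(c, R), (∏ i ∈ Finset.Icc 1 m, (z - a i) ^ t i)⁻¹)‖ ≤
      (2 : ℝ) ^ ((∑ i ∈ Finset.Icc 1 m, t i : ℤ) - 1) /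
        ((sInf {d : ℝ | ∃ i ∈ Finset.Icc 1 l, d = ‖a i - a m‖}) ^ (t m : ℤ) *
          (sInf {d : ℝ | ∃ i ∈ Finset.Icc 1 l, ∃ j ∈ Finset.Icc (l + 1) m,
              d = ‖a i - a j‖}) ^
            ((∑ i ∈ Finset.Icc 1 m, t i : ℤ) - (t m : ℤ) - 1)) := by
  set Λ := {d : ℝ | ∃ i ∈ Finset.Icc 1 l, d = ‖a i - a m‖}
  set Δ := {d : ℝ | ∃ i ∈ Finset.Icc 1 l, ∃ j ∈ Finset.Icc (l + 1) m, d = ‖a i - a j‖}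
  have h1 : 1 ∈ Finset.Icc 1 l := Finset.mem_Icc.2 ⟨le_rfl, hl1⟩
  have hm : m ∈ Finset.Icc (l + 1) m := Finset.mem_Icc.2 ⟨hlm, le_rfl⟩
  have hδ_le : ∀ i ∈ Finset.Icc 1 l, ∀ j ∈ Finset.Icc (l + 1) m, sInf Δ ≤ ‖a i - a j‖ :=
    fun i hi j hj => csInf_le ⟨0, by rintro _ ⟨_, _, _, _, rfl⟩; positivity⟩ ⟨i, hi, j, hj, rfl⟩
  have hlam_le : ∀ i ∈ Finset.Icc 1 l, sInf Λ ≤ ‖a i - a m‖ :=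
    fun i hi => csInf_le ⟨0, by rintro _ ⟨_, _, rfl⟩; positivity⟩ ⟨i, hi, rfl⟩
  have hδ_pos : 0 < sInf Δ := sInf_norm_sub_pos ⟨1, h1⟩ ⟨m, hm⟩ fun i hi j hj h =>
    (hin i hi).not_gt (h ▸ hout j hj)
  have hδ_lam : sInf Δ ≤ sInf Λ :=
    le_csInf ⟨_, 1, h1, rfl⟩ (by rintro _ ⟨i, hi, rfl⟩; exact hδ_le i hi m hm)
  have hbound := norm_poleIntegral_le_mixedPoleBound hm hR hin hout hδ_pos hδ_lam hδ_le hlam_le t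
  rw [show Finset.Icc 1 l ∪ Finset.Icc (l + 1) m = Finset.Icc 1 m by ext; simp; omega,
    Nat.cast_sum] at hbound
  exact hbound

/-- **Lemma `key contour0`.**  Let `Γ` be the circle of center `c` and radius
`R > 0`, let `a_1, …, a_m` be pairwise distinct points with `a_1, …, a_l` inside `Γ` and
`a_{l+1}, …, a_m` outside `Γ` (`1 ≤ l < m`), and let `t_1, …, t_m` be nonnegative integers
with `s = ∑ t_i`, `t = t_m`, `δ = min_{i ≤ l < j} |a_i − a_j|` and `λ = min_{i ≤ l} |a_i − a_m|`.
Then `|(1/(2πi)) ∮_Γ dz / ∏_i (z − a_i)^{t_i}| ≤ 2^{s−1} / (λ^t δ^{s−t−1})`. -/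
theorem contour_mixed_poles_bound {m l : ℕ} (hl1 : 1 ≤ l) (hlm : l < m)
    (c : ℂ) (R : ℝ) (hR : 0 < R) (a : ℕ → ℂ)
    (hinj : ∀ i ∈ Finset.Icc 1 m, ∀ j ∈ Finset.Icc 1 m, a i = a j → i = j)
    (hin : ∀ i ∈ Finset.Icc 1 l, ‖a i - c‖ < R)
    (hout : ∀ j ∈ Finset.Icc (l + 1) m, R < ‖a j - c‖)
    (t : ℕ → ℕ) :
    ‖(2 * (Real.pi : ℂ) * Complex.I)⁻¹ *
        (∮ z in C(c, R), (∏ i ∈ Finset.Icc 1 m, (z - a i) ^ t i)⁻¹)‖ ≤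
      (2 : ℝ) ^ ((∑ i ∈ Finset.Icc 1 m, t i : ℤ) - 1) /
        ((sInf {d : ℝ | ∃ i ∈ Finset.Icc 1 l, d = ‖a i - a m‖}) ^ (t m : ℤ) *
          (sInf {d : ℝ | ∃ i ∈ Finset.Icc 1 l, ∃ j ∈ Finset.Icc (l + 1) m,
              d = ‖a i - a j‖}) ^
            ((∑ i ∈ Finset.Icc 1 m, t i : ℤ) - (t m : ℤ) - 1)) :=
  contour_mixed_poles_bound_general hl1 hlm c R hR a hin hout t
end
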